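/- arXiv:1712.05707 — 2 statements merged into one kernel-verified Lean document; each statement's English description precedes it below -/
import Mathlib

section
/- For n ≥ 2 and (s₁,…,s_{n-1},p) ∈ ℂⁿ, the point (s₁,…,s_{n-1},p) belongs to Γₙ if and only if |p| ≤ 1 and there exists (c₁,…,c_{n-1}) ∈ Γ_{n-1} such that sᵢ = cᵢ + conj(c_{n-i})·p for every i = 1,…,n-1. -/
open Finset

/-- The `k`-th elementary symmetric polynomial of `z₁, …, zₙ`. -/
noncomputable def esymC (n k : ℕ) (z : Fin n → ℂ) : ℂ :=
  ∑ t ∈ Finset.powersetCard k (Finset.univ : Finset (Fin n)), ∏ j ∈ t, z j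

/-- The symmetrization map `πₙ(z) = (e₁(z), …, eₙ(z))`. -/
noncomputable def symMap (n : ℕ) (z : Fin n → ℂ) : Fin n → ℂ :=
  fun k => esymC n (k.1 + 1) z

/-- The closed symmetrized polydisc `Γₙ`. -/
noncomputable def closedSymPolydisc (n : ℕ) : Set (Fin n → ℂ) :=
  {x | ∃ z : Fin n → ℂ, (∀ j, ‖z j‖ ≤ 1) ∧ symMap n z = x}

/-!
Identify a point of `Γₙ` with the monic polynomial `P = ∏ (X - zⱼ)` whose roots lie in the
closed unit disc, and let `P♯ = Xⁿ · conj (P (1 / conj X))`. Costara's relation between `x` and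
`c` says exactly that `P = X Q + P(0) Q♯`, where `Q` is the polynomial of `c`.

If the roots of `Q` lie in the disc and `|w| > 1`, then `|Q♯(w)| ≤ |Q(w)| < |w Q(w)|`, since
each root `v` satisfies `|w - v|² - |1 - v̄ w|² = (|w|² - 1)(1 - |v|²) ≥ 0`; hence `P(w) ≠ 0`.
Conversely, given `P`, take the Schur transform `Q = (P - P(0) P♯) / ((1 - |P(0)|²) X)` when
`|P(0)| < 1`, and `Q = P' / n` when `|P(0)| = 1`: then all roots of `P` lie on the circle, `P`
is self-inversive (`P♯ = conj P(0) · P`), and the Gauss–Lucas theorem keeps the roots of `P'`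
in the disc.
-/

open Polynomial ComplexConjugate

theorem Multiset.exists_fin_map_eq {α : Type*} {n : ℕ} (s : Multiset α)
    (hs : Multiset.card s = n) : ∃ z : Fin n → α, univ.val.map z = s := by
  obtain ⟨l, rfl⟩ := Quot.exists_rep s
  obtain rfl : l.length = n := hs
  exact ⟨l.get, by rw [Fin.univ_val_map, List.ofFn_get]; rfl⟩

namespace Polynomial

theorem Monic.exists_eq_prod_X_sub_C {K : Type*} [Field K] [IsAlgClosed K] {P : K[X]}
    (hP : P.Monic) {n : ℕ} (hn : P.natDegree = n) :
    ∃ z : Fin n → K, P = ∏ j, (X - C (z j)) := by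
  obtain ⟨z, hz⟩ := P.roots.exists_fin_map_eq (IsAlgClosed.card_roots_eq_natDegree.trans hn)
  refine ⟨z, ?_⟩
  rw [← prod_multiset_X_sub_C_of_monic_of_roots_card_eq hP IsAlgClosed.card_roots_eq_natDegree,
    ← hz, Multiset.map_map, Finset.prod_eq_multiset_prod]
  rfl

theorem isRoot_prod_X_sub_C_iff {R : Type*} [CommRing R] [IsDomain R] {n : ℕ} {z : Fin n → R}
    {w : R} :
    (∏ j, (X - C (z j))).IsRoot w ↔ ∃ j, w = z j := by
  simp [eval_prod, Finset.prod_eq_zero_iff, sub_eq_zero]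

theorem coeff_zero_prod_X_sub_C {R : Type*} [CommRing R] {n : ℕ} (z : Fin n → R) :
    (∏ j, (X - C (z j))).coeff 0 = ∏ j, -z j := by
  simp [coeff_zero_eq_eval_zero, eval_prod]

theorem monic_and_natDegree_eq_of_coeff_eq_one {R : Type*} [Semiring R] [Nontrivial R] {n : ℕ}
    {f : R[X]} (h : f.natDegree ≤ n) (h1 : f.coeff n = 1) : f.Monic ∧ f.natDegree = n :=
  ⟨monic_of_natDegree_le_of_coeff_eq_one n h h1,
    natDegree_eq_of_le_of_coeff_ne_zero h (h1 ▸ one_ne_zero)⟩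

theorem reflect_derivative {R : Type*} [CommRing R] {n : ℕ} {f : R[X]}
    (hf : f.natDegree ≤ n + 1) :
    reflect n (derivative f) =
      C ((n : R) + 1) * reflect (n + 1) f - X * derivative (reflect (n + 1) f) := by
  ext k
  rcases k with _ | k
  · simp [coeff_reflect, coeff_derivative, mul_comm]
  simp only [coeff_reflect, coeff_derivative, coeff_sub, coeff_C_mul, coeff_X_mul]
  rcases lt_trichotomy k n with hk | rfl | hk
  · rw [revAt_le (by omega), revAt_le (by omega), show n - (k + 1) + 1 = n + 1 - (k + 1) by omega,
      Nat.cast_sub (by omega)]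
    push_cast
    ring
  · rw [revAt_eq_self_of_lt (by omega), revAt_le le_rfl, Nat.sub_self,
      coeff_eq_zero_of_natDegree_lt (by omega)]
    push_cast
    ring
  · rw [revAt_eq_self_of_lt (by omega), revAt_eq_self_of_lt (by omega),
      coeff_eq_zero_of_natDegree_lt (by omega), coeff_eq_zero_of_natDegree_lt (by omega)]
    ring

end Polynomial

theorem coeff_prod_X_sub_C_eq_esymC {n k : ℕ} (z : Fin n → ℂ) (hk : k ≤ n) :
    (∏ j, (X - C (z j))).coeff (n - k) = (-1) ^ k * esymC n k z := by
  have h := (univ.val.map z).prod_X_sub_C_coeff (k := n - k) (by simp)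
  rw [Multiset.map_map, Multiset.card_map, card_val, card_univ, Fintype.card_fin,
    Nat.sub_sub_self hk, Finset.esymm_map_val] at h
  rw [Finset.prod_eq_multiset_prod]
  exact h

/-- `symCoords n P = (s₁, …, sₙ)` when `P = Xⁿ - s₁ Xⁿ⁻¹ + ⋯ + (-1)ⁿ sₙ`. -/
noncomputable def symCoords (n : ℕ) (P : ℂ[X]) : Fin n → ℂ :=
  fun k => (-1) ^ (k.1 + 1) * P.coeff (n - (k.1 + 1))

theorem symCoords_prod_X_sub_C {n : ℕ} (z : Fin n → ℂ) :
    symCoords n (∏ j, (X - C (z j))) = symMap n z := by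
  ext k
  rw [symCoords, coeff_prod_X_sub_C_eq_esymC z k.2, ← mul_assoc, ← mul_pow]
  norm_num [symMap]

theorem mem_closedSymPolydisc_iff {n : ℕ} {x : Fin n → ℂ} :
    x ∈ closedSymPolydisc n ↔ ∃ P : ℂ[X], P.Monic ∧ P.natDegree = n ∧
      (∀ w, P.IsRoot w → ‖w‖ ≤ 1) ∧ symCoords n P = x := by
  constructor
  · rintro ⟨z, hz, rfl⟩
    refine ⟨_, monic_prod_X_sub_C z univ, by simp, ?_, symCoords_prod_X_sub_C z⟩
    rintro w hw
    obtain ⟨j, rfl⟩ := isRoot_prod_X_sub_C_iff.mp hw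
    exact hz j
  · rintro ⟨P, hP, hdeg, hroots, rfl⟩
    obtain ⟨z, rfl⟩ := hP.exists_eq_prod_X_sub_C hdeg
    exact ⟨z, fun j => hroots _ (isRoot_prod_X_sub_C_iff.mpr ⟨j, rfl⟩),
      (symCoords_prod_X_sub_C z).symm⟩

/-- The conjugate reciprocal `Xⁿ · conj (P (1 / conj X))` of a polynomial `P` of degree `≤ n`. -/
noncomputable def conjReflect (n : ℕ) (P : ℂ[X]) : ℂ[X] :=
  (P.map (starRingEnd ℂ)).reflect n

theorem coeff_conjReflect (n : ℕ) (P : ℂ[X]) (k : ℕ) :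
    (conjReflect n P).coeff k = conj (P.coeff (revAt n k)) := by
  simp [conjReflect, coeff_reflect]

theorem natDegree_conjReflect_le {n : ℕ} {P : ℂ[X]} (hP : P.natDegree ≤ n) :
    (conjReflect n P).natDegree ≤ n :=
  natDegree_reflect_le.trans (max_le le_rfl ((natDegree_map_le).trans hP))

theorem conjReflect_sub (n : ℕ) (P Q : ℂ[X]) :
    conjReflect n (P - Q) = conjReflect n P - conjReflect n Q := by
  simp [conjReflect, reflect_sub]

theorem conjReflect_C_mul (n : ℕ) (a : ℂ) (P : ℂ[X]) :
    conjReflect n (C a * P) = C (conj a) * conjReflect n P := by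
  simp [conjReflect, reflect_C_mul]

theorem conjReflect_conjReflect (n : ℕ) (P : ℂ[X]) : conjReflect n (conjReflect n P) = P := by
  simp [conjReflect, reflect_map, Polynomial.map_map]

theorem conjReflect_mul {a b : ℕ} {P Q : ℂ[X]} (hP : P.natDegree ≤ a) (hQ : Q.natDegree ≤ b) :
    conjReflect (a + b) (P * Q) = conjReflect a P * conjReflect b Q := by
  rw [conjReflect, Polynomial.map_mul, reflect_mul _ _ (natDegree_map_le.trans hP)
    (natDegree_map_le.trans hQ)]
  rfl

theorem conjReflect_X_mul {n : ℕ} {P : ℂ[X]} (hP : P.natDegree ≤ n) :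
    conjReflect (n + 1) (X * P) = conjReflect n P := by
  rw [add_comm, conjReflect_mul natDegree_X_le hP]
  simp [conjReflect]

theorem conjReflect_prod_X_sub_C {n : ℕ} (z : Fin n → ℂ) :
    conjReflect n (∏ j, (X - C (z j))) = ∏ j, (1 - C (conj (z j)) * X) := by
  induction n with
  | zero => simp [conjReflect]
  | succ n ih =>
    rw [Fin.prod_univ_castSucc, Fin.prod_univ_castSucc, conjReflect_mul (by simp)
      (natDegree_X_sub_C_le _), ih]
    congr 1
    simp [conjReflect, reflect_sub, reflect_C]

theorem conjReflect_derivative {n : ℕ} {P : ℂ[X]} (hP : P.natDegree ≤ n + 1) :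
    conjReflect n (derivative P) =
      C ((n : ℂ) + 1) * conjReflect (n + 1) P - X * derivative (conjReflect (n + 1) P) := by
  rw [conjReflect, ← derivative_map, reflect_derivative (natDegree_map_le.trans hP)]
  rfl

theorem norm_one_sub_conj_mul_le_norm_sub {v w : ℂ} (hv : ‖v‖ ≤ 1) (hw : 1 ≤ ‖w‖) :
    ‖1 - conj v * w‖ ≤ ‖w - v‖ := by
  have key : Complex.normSq (w - v) - Complex.normSq (1 - conj v * w) =
      (Complex.normSq w - 1) * (1 - Complex.normSq v) := by
    simp only [Complex.normSq_apply, Complex.sub_re, Complex.sub_im, Complex.mul_re,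
      Complex.mul_im, Complex.conj_re, Complex.conj_im, Complex.one_re, Complex.one_im]
    ring
  rw [Complex.normSq_eq_norm_sq, Complex.normSq_eq_norm_sq, Complex.normSq_eq_norm_sq,
    Complex.normSq_eq_norm_sq] at key
  have : 0 ≤ (‖w‖ ^ 2 - 1) * (1 - ‖v‖ ^ 2) :=
    mul_nonneg (by nlinarith) (by nlinarith [norm_nonneg v])
  exact (sq_le_sq₀ (norm_nonneg _) (norm_nonneg _)).mp (by linarith)

theorem norm_eval_conjReflect_le {n : ℕ} {P : ℂ[X]} (hP : P.Monic) (hdeg : P.natDegree = n)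
    (hroots : ∀ w, P.IsRoot w → ‖w‖ ≤ 1) {w : ℂ} (hw : 1 ≤ ‖w‖) :
    ‖(conjReflect n P).eval w‖ ≤ ‖P.eval w‖ := by
  obtain ⟨z, rfl⟩ := hP.exists_eq_prod_X_sub_C hdeg
  rw [conjReflect_prod_X_sub_C, eval_prod, eval_prod, norm_prod, norm_prod]
  refine prod_le_prod (fun _ _ => norm_nonneg _) fun j _ => ?_
  simpa using norm_one_sub_conj_mul_le_norm_sub
    (hroots _ (isRoot_prod_X_sub_C_iff.mpr ⟨j, rfl⟩)) hw

theorem norm_coeff_zero_le_one {n : ℕ} {P : ℂ[X]} (hP : P.Monic) (hdeg : P.natDegree = n)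
    (hroots : ∀ w, P.IsRoot w → ‖w‖ ≤ 1) : ‖P.coeff 0‖ ≤ 1 := by
  obtain ⟨z, rfl⟩ := hP.exists_eq_prod_X_sub_C hdeg
  rw [coeff_zero_prod_X_sub_C, norm_prod]
  exact prod_le_one (fun _ _ => norm_nonneg _) fun j _ => by
    simpa using hroots _ (isRoot_prod_X_sub_C_iff.mpr ⟨j, rfl⟩)

theorem conjReflect_eq_C_mul_self {n : ℕ} {P : ℂ[X]} (hP : P.Monic) (hdeg : P.natDegree = n)
    (hroots : ∀ w, P.IsRoot w → ‖w‖ ≤ 1) (hq : ‖P.coeff 0‖ = 1) :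
    conjReflect n P = C (conj (P.coeff 0)) * P := by
  obtain ⟨z, rfl⟩ := hP.exists_eq_prod_X_sub_C hdeg
  have hz : ∀ j, ‖z j‖₊ ≤ 1 := fun j => hroots _ (isRoot_prod_X_sub_C_iff.mpr ⟨j, rfl⟩)
  have hz1 : ∀ j, ‖z j‖₊ = 1 := by
    rw [coeff_zero_prod_X_sub_C] at hq
    have hq : ∏ j, ‖z j‖₊ = 1 := by simpa [← NNReal.coe_inj] using hq
    simpa using (prod_eq_one_iff_of_le_one' fun j _ => hz j).mp hq
  rw [conjReflect_prod_X_sub_C, coeff_zero_prod_X_sub_C, map_prod, map_prod, ← prod_mul_distrib]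
  refine prod_congr rfl fun j _ => ?_
  -- `1 - z̄ X = -z̄ (X - z)` because `z̄ z = 1`
  have : C (conj (z j)) * C (z j) = 1 := by
    rw [← map_mul, ← Complex.normSq_eq_conj_mul_self, Complex.normSq_eq_norm_sq]
    simp [← coe_nnnorm, hz1 j]
  rw [map_neg, map_neg]
  linear_combination -this

section Costara

variable {m : ℕ} {P Q : ℂ[X]}

theorem monic_X_mul_add_C_mul_conjReflect (hQ : Q.Monic) (hdeg : Q.natDegree = m) (q : ℂ) :
    (X * Q + C q * conjReflect m Q).Monic ∧ (X * Q + C q * conjReflect m Q).natDegree = m + 1 := by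
  have hXQ : (X * Q).natDegree = m + 1 := by rw [natDegree_X_mul hQ.ne_zero, hdeg]
  have hlt : (C q * conjReflect m Q).degree < (X * Q).degree :=
    degree_lt_degree <| hXQ ▸ Nat.lt_succ_of_le
      ((natDegree_C_mul_le _ _).trans (natDegree_conjReflect_le hdeg.le))
  exact ⟨(monic_X.mul hQ).add_of_left hlt, (natDegree_add_eq_left_of_degree_lt hlt).trans hXQ⟩

theorem norm_le_one_of_isRoot_X_mul_add_C_mul_conjReflect (hQ : Q.Monic)
    (hdeg : Q.natDegree = m) (hroots : ∀ w, Q.IsRoot w → ‖w‖ ≤ 1) {q : ℂ} (hq : ‖q‖ ≤ 1) :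
    ∀ w, (X * Q + C q * conjReflect m Q).IsRoot w → ‖w‖ ≤ 1 := by
  intro w hw
  by_contra! hw1
  have hQw : 0 < ‖Q.eval w‖ := norm_pos_iff.mpr fun h => (hroots w h).not_gt hw1
  have heq : ‖w * Q.eval w‖ = ‖q * (conjReflect m Q).eval w‖ := by
    simp only [IsRoot, eval_add, eval_mul, eval_X, eval_C] at hw
    rw [eq_neg_of_add_eq_zero_left hw, norm_neg]
  have hle := norm_eval_conjReflect_le hQ hdeg hroots hw1.le
  rw [norm_mul, norm_mul] at heq
  nlinarith [norm_nonneg q, norm_nonneg ((conjReflect m Q).eval w)]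

theorem exists_eq_X_mul_add_C_mul_conjReflect_of_norm_lt_one (hP : P.Monic)
    (hdeg : P.natDegree = m + 1) (hroots : ∀ w, P.IsRoot w → ‖w‖ ≤ 1) (hq : ‖P.coeff 0‖ < 1) :
    ∃ Q : ℂ[X], Q.Monic ∧ Q.natDegree = m ∧ (∀ w, Q.IsRoot w → ‖w‖ ≤ 1) ∧
      P = X * Q + C (P.coeff 0) * conjReflect m Q := by
  set q := P.coeff 0
  have hPtop : P.coeff (m + 1) = 1 := hdeg ▸ hP.coeff_natDegree
  set S := P - C q * conjReflect (m + 1) P with hS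
  have hSX : X * S.divX = S := by
    have : S.coeff 0 = 0 := by simp [S, q, coeff_conjReflect, hPtop]
    simpa [this] using X_mul_divX_add S
  have hSdivX : S.divX.natDegree ≤ m := by
    have : S.natDegree ≤ m + 1 := (natDegree_sub_le _ _).trans <| max_le hdeg.le <|
      (natDegree_C_mul_le _ _).trans (natDegree_conjReflect_le hdeg.le)
    rw [natDegree_divX_eq_natDegree_tsub_one]; omega
  have hu : (1 - q * conj q) ≠ 0 := by
    rw [Complex.mul_conj, Complex.normSq_eq_norm_sq, sub_ne_zero]
    exact_mod_cast (by nlinarith [norm_nonneg q] : (1 : ℝ) ≠ ‖q‖ ^ 2)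
  set u := (1 - q * conj q)⁻¹
  have hCu : C u * (1 - C q * C (conj q)) = 1 := by
    rw [← map_mul, ← map_one C, ← map_sub, ← map_mul, inv_mul_cancel₀ hu]
  obtain ⟨hmonic, hQdeg⟩ : (C u * S.divX).Monic ∧ (C u * S.divX).natDegree = m :=
    monic_and_natDegree_eq_of_coeff_eq_one ((natDegree_C_mul_le _ _).trans hSdivX) (by
      simp [S, coeff_divX, coeff_conjReflect, hPtop, u, q, inv_mul_cancel₀ hu])
  refine ⟨_, hmonic, hQdeg, fun w hw => ?_, ?_⟩
  · by_contra! hw1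
    have hPw : 0 < ‖P.eval w‖ := norm_pos_iff.mpr fun h => (hroots w h).not_gt hw1
    rw [IsRoot, eval_mul, eval_C] at hw
    have hSw : S.eval w = 0 := by
      rw [← hSX, eval_mul, (mul_eq_zero.mp hw).resolve_left (by simpa [u] using hu), mul_zero]
    have heq : ‖P.eval w‖ = ‖q‖ * ‖(conjReflect (m + 1) P).eval w‖ := by
      simp only [S, eval_sub, eval_mul, eval_C, sub_eq_zero] at hSw
      rw [hSw, norm_mul]
    have hle := norm_eval_conjReflect_le hP hdeg hroots hw1.le
    nlinarith [norm_nonneg q]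
  · have hSrefl : conjReflect (m + 1) S = conjReflect (m + 1) P - C (conj q) * P := by
      rw [hS, conjReflect_sub, conjReflect_C_mul, conjReflect_conjReflect]
    have hu_conj : conj u = u := by simp [u, mul_comm]
    rw [conjReflect_C_mul, hu_conj, ← conjReflect_X_mul hSdivX, hSX, hSrefl]
    linear_combination (-(C u)) * hSX - C u * hS - P * hCu

theorem exists_eq_X_mul_add_C_mul_conjReflect_of_norm_eq_one (hP : P.Monic)
    (hdeg : P.natDegree = m + 1) (hroots : ∀ w, P.IsRoot w → ‖w‖ ≤ 1) (hq : ‖P.coeff 0‖ = 1) :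
    ∃ Q : ℂ[X], Q.Monic ∧ Q.natDegree = m ∧ (∀ w, Q.IsRoot w → ‖w‖ ≤ 1) ∧
      P = X * Q + C (P.coeff 0) * conjReflect m Q := by
  have hPtop : P.coeff (m + 1) = 1 := hdeg ▸ hP.coeff_natDegree
  have hn : ((m : ℂ) + 1) ≠ 0 := Nat.cast_add_one_ne_zero m
  obtain ⟨hmonic, hQdeg⟩ : (C ((m : ℂ) + 1)⁻¹ * derivative P).Monic ∧
      (C ((m : ℂ) + 1)⁻¹ * derivative P).natDegree = m :=
    monic_and_natDegree_eq_of_coeff_eq_one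
      ((natDegree_C_mul_le _ _).trans ((natDegree_derivative_le P).trans (by omega)))
      (by simp [coeff_derivative, hPtop, hn])
  refine ⟨_, hmonic, hQdeg, fun w hw => ?_, ?_⟩
  · have hP' : derivative P ≠ 0 := right_ne_zero_of_mul hmonic.ne_zero
    have hw' : w ∈ (derivative P).rootSet ℂ := by
      rw [IsRoot, eval_mul, eval_C] at hw
      rw [mem_rootSet_of_ne hP', coe_aeval_eq_eval]
      exact (mul_eq_zero.mp hw).resolve_left (by simpa using hn)
    have hdisc : convexHull ℝ (P.rootSet ℂ) ⊆ Metric.closedBall 0 1 :=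
      convexHull_min (fun z hz => by
          simpa using hroots z (by simpa using (mem_rootSet.mp hz).2))
        (convex_closedBall 0 1)
    have hdegpos : 0 < P.degree := by
      rw [degree_eq_natDegree hP.ne_zero, hdeg]; exact_mod_cast m.succ_pos
    simpa using hdisc (rootSet_derivative_subset_convexHull_rootSet hdegpos hw')
  · have hqq : C (P.coeff 0) * C (conj (P.coeff 0)) = 1 := by
      rw [← map_mul, Complex.mul_conj, Complex.normSq_eq_norm_sq, hq]; simp
    have hnn : C ((m : ℂ) + 1)⁻¹ * C ((m : ℂ) + 1) = 1 := by
      rw [← map_mul, inv_mul_cancel₀ hn, map_one]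
    rw [conjReflect_C_mul, conjReflect_derivative hdeg.le,
      conjReflect_eq_C_mul_self hP hdeg hroots hq, derivative_C_mul]
    have hconj : conj ((m : ℂ) + 1)⁻¹ = ((m : ℂ) + 1)⁻¹ := by
      rw [map_inv₀, map_add, map_natCast, map_one]
    rw [hconj]
    linear_combination (C ((m : ℂ) + 1)⁻¹ * X * derivative P -
      C ((m : ℂ) + 1)⁻¹ * C ((m : ℂ) + 1) * P) * hqq - P * hnn

theorem exists_eq_X_mul_add_C_mul_conjReflect (hP : P.Monic) (hdeg : P.natDegree = m + 1)
    (hroots : ∀ w, P.IsRoot w → ‖w‖ ≤ 1) :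
    ∃ Q : ℂ[X], Q.Monic ∧ Q.natDegree = m ∧ (∀ w, Q.IsRoot w → ‖w‖ ≤ 1) ∧
      P = X * Q + C (P.coeff 0) * conjReflect m Q :=
  (norm_coeff_zero_le_one hP hdeg hroots).lt_or_eq.elim
    (exists_eq_X_mul_add_C_mul_conjReflect_of_norm_lt_one hP hdeg hroots)
    (exists_eq_X_mul_add_C_mul_conjReflect_of_norm_eq_one hP hdeg hroots)

theorem symCoords_X_mul_add_C_mul_conjReflect_last (hQ : Q.Monic) (hdeg : Q.natDegree = m)
    (q : ℂ) :
    symCoords (m + 1) (X * Q + C q * conjReflect m Q) (Fin.last m) = (-1) ^ (m + 1) * q := by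
  simp [symCoords, coeff_conjReflect, ← hdeg, hQ.coeff_natDegree]

theorem symCoords_X_mul_add_C_mul_conjReflect_castSucc (q : ℂ) (i : Fin m) :
    symCoords (m + 1) (X * Q + C q * conjReflect m Q) i.castSucc =
      symCoords m Q i + conj (symCoords m Q i.rev) * ((-1) ^ (m + 1) * q) := by
  have hi := i.2
  have hsign : (-1 : ℂ) ^ (i.1 + 1) = (-1) ^ (m - i.1) * (-1) ^ (m + 1) := by
    rw [← pow_add, show m - i.1 + (m + 1) = i.1 + 1 + 2 * (m - i.1) by omega,
      pow_add (-1 : ℂ) (i.1 + 1), pow_mul]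
    norm_num
  simp only [symCoords, Fin.val_castSucc, Fin.val_rev, coeff_add, coeff_C_mul, coeff_conjReflect,
    map_mul, map_pow, map_neg, map_one]
  rw [show m + 1 - (i.1 + 1) = m - (i.1 + 1) + 1 by omega, coeff_X_mul,
    revAt_le (by omega), show m - (m - (i.1 + 1) + 1) = i.1 by omega,
    show m - (i.1 + 1) + 1 = m - i.1 by omega, hsign]
  ring

end Costara

/-- Here `x i.castSucc = sᵢ₊₁`, `x (Fin.last m) = p`, and `c i.rev = c_{n-i}` when `c i = cᵢ₊₁`. -/
theorem mem_closedSymPolydisc_iff_exists_rep_general (m : ℕ)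
    (x : Fin (m + 1) → ℂ) :
    x ∈ closedSymPolydisc (m + 1) ↔
      ‖x (Fin.last m)‖ ≤ 1 ∧
        ∃ c : Fin m → ℂ, c ∈ closedSymPolydisc m ∧
          ∀ i : Fin m,
            x i.castSucc = c i + (starRingEnd ℂ) (c i.rev) * x (Fin.last m) := by
  rw [mem_closedSymPolydisc_iff]
  constructor
  · rintro ⟨P, hP, hdeg, hroots, rfl⟩
    obtain ⟨Q, hQ, hQdeg, hQroots, hPQ⟩ := exists_eq_X_mul_add_C_mul_conjReflect hP hdeg hroots
    refine ⟨by simpa [symCoords] using norm_coeff_zero_le_one hP hdeg hroots, symCoords m Q,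
      mem_closedSymPolydisc_iff.mpr ⟨Q, hQ, hQdeg, hQroots, rfl⟩, fun i => ?_⟩
    rw [hPQ, symCoords_X_mul_add_C_mul_conjReflect_castSucc,
      symCoords_X_mul_add_C_mul_conjReflect_last hQ hQdeg]
  · rintro ⟨hp, c, hc, hrel⟩
    obtain ⟨Q, hQ, hQdeg, hQroots, rfl⟩ := mem_closedSymPolydisc_iff.mp hc
    set q := (-1) ^ (m + 1) * x (Fin.last m)
    have hq : (-1) ^ (m + 1) * q = x (Fin.last m) := by simp [q, ← mul_assoc, ← mul_pow]
    obtain ⟨hPmon, hPdeg⟩ := monic_X_mul_add_C_mul_conjReflect hQ hQdeg q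
    refine ⟨_, hPmon, hPdeg, norm_le_one_of_isRoot_X_mul_add_C_mul_conjReflect hQ hQdeg hQroots
      (by simpa [q] using hp), funext fun i => ?_⟩
    induction i using Fin.lastCases with
    | last => rw [symCoords_X_mul_add_C_mul_conjReflect_last hQ hQdeg, hq]
    | cast i => rw [symCoords_X_mul_add_C_mul_conjReflect_castSucc, hq, hrel]

/-- Costara's characterization: for `n = m + 1 ≥ 2`, a point
`(s₁, …, s_{n-1}, p)` (here `x i.castSucc = s_{i+1}` for `i : Fin m` and
`x (Fin.last m) = p`) lies in `Γₙ` iff `|p| ≤ 1` and there is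
`(c₁, …, c_{n-1}) ∈ Γ_{n-1}` with `sᵢ = cᵢ + conj(c_{n-i}) p` for all
`i = 1, …, n-1` (note `c i.rev = c_{n-i}` when `c i = c_{i+1}`). -/
theorem mem_closedSymPolydisc_iff_exists_rep (m : ℕ) (hm : 1 ≤ m)
    (x : Fin (m + 1) → ℂ) :
    x ∈ closedSymPolydisc (m + 1) ↔
      ‖x (Fin.last m)‖ ≤ 1 ∧
        ∃ c : Fin m → ℂ, c ∈ closedSymPolydisc m ∧
          ∀ i : Fin m,
            x i.castSucc = c i + (starRingEnd ℂ) (c i.rev) * x (Fin.last m) :=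
  mem_closedSymPolydisc_iff_exists_rep_general m x
end

section
/- For n ≥ 2, if (s₁,…,s_{n-1},p) ∈ 𝔾ₙ then |p| < 1 and the tuple Q = ((s₁ − conj(s_{n-1})p)/(1−|p|²), (s₂ − conj(s_{n-2})p)/(1−|p|²), …, (s_{n-1} − conj(s₁)p)/(1−|p|²)) belongs to 𝔾_{n-1}. -/
open Finset

/-- The open symmetrized polydisc `𝔾ₙ`. -/
noncomputable def openSymPolydisc (n : ℕ) : Set (Fin n → ℂ) :=
  {x | ∃ z : Fin n → ℂ, (∀ j, ‖z j‖ < 1) ∧ symMap n z = x}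

/-!
Write `x = πₙ(z)`, `f = ∏ (X + zⱼ)` and `f* = ∏ (1 + conj zⱼ X)` for the reciprocal polynomial of
`f`, so that `f` has coefficients `e_{n-k}`, `f*` has coefficients `conj e_k`, and `f(0) = p`.
The Schur–Cohn transform `h = f - p f*` has coefficients `e_{n-k} - p conj e_k`: it vanishes at `0`,
its leading coefficient is `1 - |p|²`, and the coefficients of `h / X` are the numerators of `Q`.
For `|t| ≥ 1` every factor satisfies `|1 + conj zⱼ t| ≤ |t + zⱼ|`, so `|f*(t)| ≤ |f(t)| ≠ 0`
and `h(t) ≠ 0` as `|p| < 1`. Hence all roots of `h / X` lie in `𝔻`, and by Vieta's formulas `Q`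
is the image under `π_{n-1}` of their negatives.
-/

open Polynomial ComplexConjugate

theorem esymC_eq_esymm {n : ℕ} (k : ℕ) (z : Fin n → ℂ) :
    esymC n k z = (univ.val.map z).esymm k := by
  rw [Finset.esymm_map_val]; rfl

theorem esymC_zero {n : ℕ} (z : Fin n → ℂ) : esymC n 0 z = 1 := by
  simp [esymC]

theorem esymC_self {n : ℕ} (z : Fin n → ℂ) : esymC n n z = ∏ j, z j := by
  have h := Finset.powersetCard_self (univ : Finset (Fin n))
  rw [Finset.card_univ, Fintype.card_fin] at h
  simp [esymC, h]

theorem esymC_conj {n : ℕ} (k : ℕ) (z : Fin n → ℂ) :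
    esymC n k (fun j => conj (z j)) = conj (esymC n k z) := by
  simp [esymC, map_sum, map_prod]

theorem coeff_prod_X_add_C {n k : ℕ} (z : Fin n → ℂ) (hk : k ≤ n) :
    (∏ j, (X + C (z j))).coeff k = esymC n (n - k) z := by
  rw [Finset.prod_X_add_C_coeff _ _ (by simpa using hk), Finset.card_univ, Fintype.card_fin]
  rfl

theorem coeff_prod_one_add_C_mul_X {n : ℕ} (k : ℕ) (z : Fin n → ℂ) :
    (∏ j, (1 + C (z j) * X)).coeff k = esymC n k z := by
  simp_rw [Finset.prod_one_add, Finset.prod_mul_distrib, ← map_prod, Finset.prod_const,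
    finsetSum_coeff, coeff_C_mul_X_pow, esymC, Finset.powersetCard_eq_filter, Finset.sum_filter]
  exact Finset.sum_congr rfl fun t _ => by split_ifs <;> simp_all [eq_comm]

theorem norm_prod_lt_one {𝕜 : Type*} [NormedField 𝕜] {n : ℕ} (z : Fin (n + 1) → 𝕜)
    (hz : ∀ j, ‖z j‖ < 1) :
    ‖∏ j, z j‖ < 1 := by
  rw [Fin.prod_univ_succ, norm_mul]
  calc ‖z 0‖ * ‖∏ j : Fin n, z j.succ‖ ≤ ‖z 0‖ * 1 := by
        gcongr
        rw [norm_prod]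
        exact Finset.prod_le_one (fun _ _ => norm_nonneg _) fun j _ => (hz _).le
    _ < 1 := by simpa using hz 0

theorem norm_one_add_conj_mul_le_norm_add {z t : ℂ} (hz : ‖z‖ ≤ 1) (ht : 1 ≤ ‖t‖) :
    ‖1 + conj z * t‖ ≤ ‖t + z‖ := by
  have key : Complex.normSq (t + z) - Complex.normSq (1 + conj z * t) =
      (Complex.normSq t - 1) * (1 - Complex.normSq z) := by
    simp only [Complex.normSq_apply, Complex.add_re, Complex.add_im, Complex.mul_re,
      Complex.mul_im, Complex.conj_re, Complex.conj_im, Complex.one_re, Complex.one_im]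
    ring
  have ht' : 1 ≤ Complex.normSq t := Complex.sq_norm t ▸ one_le_pow₀ ht
  have hz' : Complex.normSq z ≤ 1 := Complex.sq_norm z ▸ pow_le_one₀ (norm_nonneg z) hz
  rw [← sq_le_sq₀ (norm_nonneg _) (norm_nonneg _), Complex.sq_norm, Complex.sq_norm]
  nlinarith [mul_nonneg (sub_nonneg.2 ht') (sub_nonneg.2 hz')]

theorem Multiset.esymm_mem_openSymPolydisc {m : ℕ} (s : Multiset ℂ) (hcard : s.card = m)
    (hs : ∀ a ∈ s, ‖a‖ < 1) : (fun i : Fin m => s.esymm (i + 1)) ∈ openSymPolydisc m := by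
  obtain ⟨l, rfl⟩ := Quot.exists_rep s
  subst hcard
  refine ⟨fun j => l[j], fun j => hs _ (List.getElem_mem _), funext fun i => ?_⟩
  simp [symMap, esymC_eq_esymm, Fin.univ_val_map]

theorem Polynomial.coeff_div_leadingCoeff_mem_openSymPolydisc {m : ℕ} (g : ℂ[X])
    (hdeg : g.natDegree = m) (hroots : ∀ t, g.IsRoot t → ‖t‖ < 1) :
    (fun i : Fin m => g.coeff (m - (i + 1)) / g.leadingCoeff) ∈ openSymPolydisc m := by
  have hsplit : g.Splits := IsAlgClosed.splits g
  convert (g.roots.map Neg.neg).esymm_mem_openSymPolydisc ?_ ?_ using 2 with i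
  · have hg : g.leadingCoeff ≠ 0 := by
      rw [Ne, leadingCoeff_eq_zero]
      rintro rfl
      rw [natDegree_zero] at hdeg
      exact (hdeg ▸ i).elim0
    rw [coeff_eq_esymm_roots_of_splits hsplit (by omega), Multiset.esymm_neg, hdeg,
      Nat.sub_sub_self (by omega)]
    field_simp
  · rw [Multiset.card_map, splits_iff_card_roots.1 hsplit, hdeg]
  · simp only [Multiset.mem_map]
    rintro _ ⟨t, ht, rfl⟩
    rw [norm_neg]
    exact hroots t (isRoot_of_mem_roots ht)

noncomputable def schurCohn {n : ℕ} (z : Fin n → ℂ) : ℂ[X] :=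
  ∏ j, (X + C (z j)) - C (∏ j, z j) * ∏ j, (1 + C (conj (z j)) * X)

theorem coeff_schurCohn {n k : ℕ} (z : Fin n → ℂ) (hk : k ≤ n) :
    (schurCohn z).coeff k = esymC n (n - k) z - esymC n n z * conj (esymC n k z) := by
  rw [schurCohn, coeff_sub, coeff_C_mul, coeff_prod_X_add_C z hk, coeff_prod_one_add_C_mul_X,
    esymC_conj, esymC_self]

theorem coeff_zero_schurCohn {n : ℕ} (z : Fin n → ℂ) : (schurCohn z).coeff 0 = 0 := by
  rw [coeff_schurCohn z (Nat.zero_le n), esymC_zero, map_one, mul_one, Nat.sub_zero, sub_self]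

theorem natDegree_schurCohn {n : ℕ} (z : Fin (n + 1) → ℂ) (hz : ∀ j, ‖z j‖ < 1) :
    (schurCohn z).natDegree = n + 1 := by
  refine natDegree_eq_of_le_of_coeff_ne_zero ?_ ?_
  · have hprod (f : Fin (n + 1) → ℂ[X]) (hf : ∀ j, (f j).natDegree ≤ 1) :
        (∏ j, f j).natDegree ≤ n + 1 :=
      (natDegree_prod_le _ _).trans <|
        (Finset.sum_le_card_nsmul _ _ 1 fun j _ => hf j).trans (by simp)
    refine (natDegree_sub_le_of_le (hprod _ fun j => by compute_degree)
      ((natDegree_C_mul_le _ _).trans (hprod _ fun j => by compute_degree))).trans ?_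
    exact (max_self _).le
  · rw [coeff_schurCohn z le_rfl, Nat.sub_self, esymC_zero, Complex.mul_conj, esymC_self,
      ← Complex.ofReal_one, ← Complex.ofReal_sub, Complex.ofReal_ne_zero, ← Complex.sq_norm,
      sub_ne_zero]
    exact (pow_lt_one₀ (norm_nonneg _) (norm_prod_lt_one z hz) two_ne_zero).ne'

theorem norm_lt_one_of_isRoot_schurCohn {n : ℕ} (z : Fin (n + 1) → ℂ) (hz : ∀ j, ‖z j‖ < 1)
    {t : ℂ} (ht : (schurCohn z).IsRoot t) : ‖t‖ < 1 := by
  by_contra! ht1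
  have hf : ∏ j, (t + z j) ≠ 0 := Finset.prod_ne_zero_iff.2 fun j _ h => by
    have := congrArg norm (eq_neg_of_add_eq_zero_left h)
    rw [norm_neg] at this
    linarith [hz j]
  have hle : ‖∏ j, (1 + conj (z j) * t)‖ ≤ ‖∏ j, (t + z j)‖ := by
    simp only [norm_prod]
    exact Finset.prod_le_prod (fun _ _ => norm_nonneg _) fun j _ =>
      norm_one_add_conj_mul_le_norm_add (hz j).le ht1
  have heq : ∏ j, (t + z j) = (∏ j, z j) * ∏ j, (1 + conj (z j) * t) := by
    simpa [schurCohn, eval_prod, sub_eq_zero] using ht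
  have hp := norm_prod_lt_one z hz
  have hnorm := congrArg norm heq
  rw [norm_mul] at hnorm
  linarith [mul_le_mul_of_nonneg_left hle (norm_nonneg (∏ j, z j)),
    mul_lt_mul_of_pos_right hp (norm_pos_iff.2 hf)]

/-- Here `x i.castSucc = s_{i+1}`, `x i.rev.castSucc = s_{m-i}` and `x (Fin.last m) = p`. -/
theorem Q_mem_openSymPolydisc_general (m : ℕ)
    (x : Fin (m + 1) → ℂ) (hx : x ∈ openSymPolydisc (m + 1)) :
    ‖x (Fin.last m)‖ < 1 ∧
      (fun i : Fin m =>
          (x i.castSucc - (starRingEnd ℂ) (x i.rev.castSucc) * x (Fin.last m)) /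
            (1 - (‖x (Fin.last m)‖ : ℂ) ^ 2)) ∈ openSymPolydisc m := by
  obtain ⟨z, hz, rfl⟩ := hx
  have hp : symMap (m + 1) z (Fin.last m) = ∏ j, z j := esymC_self z
  have hdeg : (schurCohn z).divX.natDegree = m := by
    rw [natDegree_divX_eq_natDegree_tsub_one, natDegree_schurCohn z hz, Nat.add_sub_cancel]
  have hroots (t : ℂ) (ht : (schurCohn z).divX.IsRoot t) : ‖t‖ < 1 := by
    refine norm_lt_one_of_isRoot_schurCohn z hz ?_
    rw [IsRoot, ← divX_mul_X_add (schurCohn z), coeff_zero_schurCohn, eval_add, eval_mul,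
      ht.eq_zero, zero_mul, eval_C, add_zero]
  refine ⟨hp ▸ norm_prod_lt_one z hz, ?_⟩
  convert (schurCohn z).divX.coeff_div_leadingCoeff_mem_openSymPolydisc hdeg hroots using 2 with i
  have hi₁ : m + 1 - (m - (i + 1) + 1) = i + 1 := by omega
  have hi₂ : m - (i + 1) + 1 = (i.rev : ℕ) + 1 := by rw [Fin.val_rev]
  rw [leadingCoeff, hdeg, coeff_divX, coeff_divX, coeff_schurCohn z le_rfl,
    coeff_schurCohn z (by omega), Nat.sub_self, esymC_zero, Complex.mul_conj, hi₁, hi₂,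
    ← Complex.sq_norm]
  simp [symMap, mul_comm]

/-- For `n = m + 1 ≥ 2`, if `(s₁, …, s_{n-1}, p) ∈ 𝔾ₙ` (here
`x i.castSucc = s_{i+1}` for `i : Fin m` and `x (Fin.last m) = p`), then
`|p| < 1` and the tuple `Q` with `Qᵢ = (sᵢ - conj(s_{n-i}) p) / (1 - |p|²)`
lies in `𝔾_{n-1}` (note `x i.rev.castSucc = s_{n-i}` when
`x i.castSucc = s_{i+1}`). -/
theorem Q_mem_openSymPolydisc (m : ℕ) (hm : 1 ≤ m)
    (x : Fin (m + 1) → ℂ) (hx : x ∈ openSymPolydisc (m + 1)) :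
    ‖x (Fin.last m)‖ < 1 ∧
      (fun i : Fin m =>
          (x i.castSucc - (starRingEnd ℂ) (x i.rev.castSucc) * x (Fin.last m)) /
            (1 - (‖x (Fin.last m)‖ : ℂ) ^ 2)) ∈ openSymPolydisc m :=
  Q_mem_openSymPolydisc_general m x hx
end
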